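/- For a bounded linear projection P on a Hilbert space V with P ≠ 0 and P ≠ id, the operator norms of P and of 1−P coincide: ‖P‖_{L(V)} = ‖1−P‖_{L(V)}. -/

import Mathlib

/-!
Write `Q = 1 - P` and split `v = m + u` orthogonally with `m ∈ range P` and `u ⊥ range P`.
Then `P v = m + P u`, and since `Q u = u - P u` with `P u ∈ range P ⊥ u`, Pythagoras gives
`‖P u‖² ≤ (‖Q‖² - 1) ‖u‖²`. Cauchy–Schwarz in `ℝ²` then bounds `‖m‖ + ‖P u‖` by
`‖Q‖ · √(‖m‖² + ‖u‖²) = ‖Q‖ ‖v‖`, so `‖P‖ ≤ ‖1 - P‖`; applying this to `1 - P` gives equality.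
Here `‖Q‖² - 1 ≥ 0` because a nonzero idempotent has norm at least `1`.
-/

open ContinuousLinearMap

theorem IsIdempotentElem.one_le_norm {R : Type*} [NonUnitalNormedRing R] {p : R}
    (hp : IsIdempotentElem p) (h0 : p ≠ 0) : 1 ≤ ‖p‖ := by
  have hpos : 0 < ‖p‖ := norm_pos_iff.mpr h0
  have h : ‖p‖ ≤ ‖p‖ * ‖p‖ := by
    calc ‖p‖ = ‖p * p‖ := by rw [hp.eq]
      _ ≤ ‖p‖ * ‖p‖ := norm_mul_le p p
  nlinarith

lemma add_sq_le_one_add_mul {a b c k : ℝ} (hk : 0 ≤ k) (h : c ^ 2 ≤ k * b ^ 2) :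
    (a + c) ^ 2 ≤ (1 + k) * (a ^ 2 + b ^ 2) := by
  rcases hk.eq_or_lt with rfl | hk
  · nlinarith [sq_nonneg c]
  · have : k * (2 * a * c) ≤ k * (b ^ 2 + k * a ^ 2) := by nlinarith [sq_nonneg (c - k * a)]
    nlinarith [le_of_mul_le_mul_left this hk]

section InnerProductSpace

variable {𝕜 E : Type*} [RCLike 𝕜] [NormedAddCommGroup E] [InnerProductSpace 𝕜 E]

theorem norm_sub_apply_sq_of_mem_orthogonal_range (P : E →L[𝕜] E) {u : E}
    (hu : u ∈ P.rangeᗮ) : ‖u - P u‖ ^ 2 = ‖u‖ ^ 2 + ‖P u‖ ^ 2 := by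
  have h : inner 𝕜 u (P u) = 0 :=
    Submodule.inner_left_of_mem_orthogonal (LinearMap.mem_range_self _ u) hu
  rw [@norm_sub_sq 𝕜, h, map_zero, mul_zero, sub_zero]

theorem IsIdempotentElem.norm_le_norm_one_sub [CompleteSpace E] {P : E →L[𝕜] E}
    (hP : IsIdempotentElem P) (h1 : P ≠ 1) : ‖P‖ ≤ ‖1 - P‖ := by
  set q := ‖1 - P‖
  have hq : 1 ≤ q := hP.one_sub.one_le_norm (sub_ne_zero.mpr h1.symm)
  have := hP.hasOrthogonalProjection_range
  refine opNorm_le_bound _ (by positivity) fun v => ?_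
  set m := P.range.starProjection v
  set u := v - m
  have hm : m ∈ P.range := P.range.starProjection_apply_mem v
  have hu : u ∈ P.rangeᗮ := P.range.sub_starProjection_mem_orthogonal v
  have hPm : P m = m := by
    obtain ⟨w, hw⟩ := hm
    rw [← hw]
    exact congr($hP.eq w)
  have hPv : ‖P v‖ ≤ ‖m‖ + ‖P u‖ := by
    calc ‖P v‖ = ‖m + P u‖ := by rw [map_sub, hPm, add_sub_cancel]
      _ ≤ ‖m‖ + ‖P u‖ := norm_add_le m (P u)
  have hv : ‖v‖ ^ 2 = ‖m‖ ^ 2 + ‖u‖ ^ 2 := by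
    have h : inner 𝕜 m u = 0 := Submodule.inner_right_of_mem_orthogonal hm hu
    rw [← show m + u = v from add_sub_cancel m v, @norm_add_sq 𝕜, h, map_zero, mul_zero,
      add_zero]
  have hPu : ‖P u‖ ^ 2 ≤ (q ^ 2 - 1) * ‖u‖ ^ 2 := by
    have hQu : ‖u - P u‖ ≤ q * ‖u‖ := (1 - P).le_opNorm u
    have := norm_sub_apply_sq_of_mem_orthogonal_range P hu
    nlinarith [pow_le_pow_left₀ (norm_nonneg _) hQu 2]
  have hsq : (‖m‖ + ‖P u‖) ^ 2 ≤ (q * ‖v‖) ^ 2 := by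
    have := add_sq_le_one_add_mul (a := ‖m‖) (by nlinarith) hPu
    rw [mul_pow, hv]
    linarith
  exact hPv.trans ((sq_le_sq₀ (by positivity) (by positivity)).mp hsq)

end InnerProductSpace

/-- For a bounded linear projection `P ≠ 0, id` on a Hilbert space,
`‖P‖ = ‖1 − P‖`. -/
theorem stmt4 {V : Type*} [NormedAddCommGroup V] [InnerProductSpace ℂ V] [CompleteSpace V]
    (P : V →L[ℂ] V) (hproj : ∀ v : V, P (P v) = P v)
    (h0 : P ≠ 0) (h1 : P ≠ ContinuousLinearMap.id ℂ V) :
    ‖P‖ = ‖ContinuousLinearMap.id ℂ V - P‖ := by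
  have hP : IsIdempotentElem P := ContinuousLinearMap.ext hproj
  rw [← one_def] at h1 ⊢
  refine le_antisymm (hP.norm_le_norm_one_sub h1) ?_
  simpa using hP.one_sub.norm_le_norm_one_sub (by simpa [sub_eq_self] using h0)
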